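/- For the rank-2 exchange matrix of type G₂, B = [[0,−3],[1,0]], the alternating mutation sequence μ₁, μ₂, μ₁, μ₂, μ₁, μ₂, μ₁, μ₂ (length 8) returns the classical y-seed to its initial value, i.e. the composition of these eight y-variable mutations is the identity on ℚ(Y₁, Y₂)². -/

import Mathlib

/-- The field of rational functions `ℚ(Y₁, Y₂)`. -/
abbrev K2 : Type := FractionRing (MvPolynomial (Fin 2) ℚ)

noncomputable def Ygen (i : Fin 2) : K2 :=
  algebraMap (MvPolynomial (Fin 2) ℚ) K2 (MvPolynomial.X i)

/-- Fomin–Zelevinsky mutation of the exchange matrix at `k`: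
`b'_{ij} = −b_{ij}` if `i = k` or `j = k`, else
`b'_{ij} = b_{ij} + [b_{ik}]₊[b_{kj}]₊ − [−b_{ik}]₊[−b_{kj}]₊`. -/
def muB (B : Matrix (Fin 2) (Fin 2) ℤ) (k : Fin 2) : Matrix (Fin 2) (Fin 2) ℤ :=
  fun i j => if i = k ∨ j = k then -B i j
    else B i j + max (B i k) 0 * max (B k j) 0 - max (-B i k) 0 * max (-B k j) 0

/-- Classical y-variable mutation at `k`: `y_k ↦ y_k⁻¹`, and for `j ≠ k`,
`y_j ↦ y_j(1+y_k)^{b_{kj}}` if `b_{kj} ≥ 0`, `y_j ↦ y_j(1+y_k⁻¹)^{b_{kj}}` if `b_{kj} ≤ 0`. -/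
noncomputable def muY (B : Matrix (Fin 2) (Fin 2) ℤ) (y : Fin 2 → K2) (k : Fin 2) :
    Fin 2 → K2 :=
  fun j => if j = k then (y k)⁻¹
    else if 0 ≤ B k j then y j * (1 + y k) ^ B k j
    else y j * (1 + (y k)⁻¹) ^ B k j

/-- Mutation of a y-seed `(B, y)`. -/
noncomputable def muSeed (S : Matrix (Fin 2) (Fin 2) ℤ × (Fin 2 → K2)) (k : Fin 2) :
    Matrix (Fin 2) (Fin 2) ℤ × (Fin 2 → K2) :=
  (muB S.1 k, muY S.1 S.2 k)

/-!
On y-variables the composite `μ₂ ∘ μ₁`, which brings `B` back to itself, is the birational map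
`(a, b) ↦ (a²b / ((1+a)³ + a³b), (1+a)³ / (a³b))` of the plane, so it suffices to see that its
fourth iterate fixes `(Y₁, Y₂)`. The orbit is computed in closed form over any field in which the
few denominators that occur do not vanish. In `ℚ(Y₁, Y₂)` they are subtraction-free polynomials
in `Y₁, Y₂`, hence nonzero because they are nonzero at `(1, 1)`.
-/

open MvPolynomial

def coxeterMutationG2 {F : Type*} [Field F] (y : Fin 2 → F) : Fin 2 → F :=
  ![(y 0)⁻¹ / (1 + (y 1 / (1 + (y 0)⁻¹) ^ 3)⁻¹), (y 1 / (1 + (y 0)⁻¹) ^ 3)⁻¹]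

theorem muSeed_G2_zero (y : Fin 2 → K2) :
    muSeed (!![0, -3; 1, 0], y) 0 = (!![0, 3; -1, 0], ![(y 0)⁻¹, y 1 / (1 + (y 0)⁻¹) ^ 3]) := by
  refine Prod.ext ?_ ?_
  · ext i j; fin_cases i <;> fin_cases j <;> simp [muSeed, muB]
  · ext j; fin_cases j <;> simp [muSeed, muY, div_eq_mul_inv]

theorem muSeed_G2_one (y : Fin 2 → K2) :
    muSeed (!![0, 3; -1, 0], y) 1 = (!![0, -3; 1, 0], ![y 0 / (1 + (y 1)⁻¹), (y 1)⁻¹]) := by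
  refine Prod.ext ?_ ?_
  · ext i j; fin_cases i <;> fin_cases j <;> simp [muSeed, muB]
  · ext j; fin_cases j <;> simp [muSeed, muY, div_eq_mul_inv]

theorem muSeed_G2_zero_one (y : Fin 2 → K2) :
    muSeed (muSeed (!![0, -3; 1, 0], y) 0) 1 = (!![0, -3; 1, 0], coxeterMutationG2 y) := by
  rw [muSeed_G2_zero, muSeed_G2_one]
  rfl

section CoxeterMutation

variable {F : Type*} [Field F] {a b a' b' : F}

theorem coxeterMutationG2_eq_of_mul_eq (ha : a ≠ 0) (hb : b ≠ 0)
    (h₀ : a' * ((1 + a) ^ 3 + a ^ 3 * b) = a ^ 2 * b) (h₁ : b' * (a ^ 3 * b) = (1 + a) ^ 3) :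
    coxeterMutationG2 ![a, b] = ![a', b'] := by
  have hD : (1 + a) ^ 3 + a ^ 3 * b ≠ 0 := by
    rintro h
    rw [h, mul_zero] at h₀
    exact mul_ne_zero (pow_ne_zero 2 ha) hb h₀.symm
  have hv : (b / (1 + a⁻¹) ^ 3)⁻¹ = (1 + a) ^ 3 / (a ^ 3 * b) := by
    rw [inv_div]; field_simp; ring
  have hw : 1 + (1 + a) ^ 3 / (a ^ 3 * b) = ((1 + a) ^ 3 + a ^ 3 * b) / (a ^ 3 * b) := by
    field_simp; ring
  simp only [coxeterMutationG2, Matrix.cons_val_zero, Matrix.cons_val_one, hv, hw,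
    eq_div_of_mul_eq hD h₀, eq_div_of_mul_eq (mul_ne_zero (pow_ne_zero 3 ha) hb) h₁]
  field_simp

theorem coxeterMutationG2_iterate_four (ha : a ≠ 0) (hb : b ≠ 0) (h1a : 1 + a ≠ 0)
    (h1b : 1 + b ≠ 0) (hC : (1 + a) ^ 2 + a ^ 2 * b ≠ 0) (hD : (1 + a) ^ 3 + a ^ 3 * b ≠ 0)
    (hE : (1 + a) ^ 3 + 3 * a ^ 2 * b + 2 * a ^ 3 * b + a ^ 3 * b ^ 2 ≠ 0)
    (hG : 1 + a + a * b ≠ 0) :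
    coxeterMutationG2^[4] ![a, b] = ![a, b] := by
  -- opaque names for the denominators, so that `field_simp` sees that they are nonzero
  set C := (1 + a) ^ 2 + a ^ 2 * b with hC_def
  set D := (1 + a) ^ 3 + a ^ 3 * b with hD_def
  set E := (1 + a) ^ 3 + 3 * a ^ 2 * b + 2 * a ^ 3 * b + a ^ 3 * b ^ 2 with hE_def
  set G := 1 + a + a * b with hG_def
  clear_value C D E G
  simp only [Function.iterate_succ_apply', Function.iterate_zero_apply]
  rw [coxeterMutationG2_eq_of_mul_eq (a' := a ^ 2 * b / D) (b' := (1 + a) ^ 3 / (a ^ 3 * b))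
      ha hb (by field_simp; simp only [hD_def]) (by field_simp),
    coxeterMutationG2_eq_of_mul_eq (a' := a * b / E) (b' := C ^ 3 / (a ^ 3 * b ^ 2))
      (by positivity) (by positivity)
      (by field_simp; simp only [hD_def, hE_def]; ring)
      (by field_simp; simp only [hC_def, hD_def]; ring),
    coxeterMutationG2_eq_of_mul_eq (a' := (a * (1 + b))⁻¹) (b' := G ^ 3 / b)
      (by positivity) (by positivity)
      (by field_simp; simp only [hC_def, hE_def]; ring)
      (by field_simp; simp only [hC_def, hE_def, hG_def]; ring),
    coxeterMutationG2_eq_of_mul_eq (a' := a) (b' := b)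
      (by positivity) (by positivity)
      (by field_simp; simp only [hG_def]; ring)
      (by field_simp; simp only [hG_def]; ring)]

end CoxeterMutation

theorem aeval_Ygen (p : MvPolynomial (Fin 2) ℚ) :
    aeval Ygen p = algebraMap (MvPolynomial (Fin 2) ℚ) K2 p :=
  (DFunLike.congr_fun (aeval_unique (IsScalarTower.toAlgHom ℚ (MvPolynomial (Fin 2) ℚ) K2)) p).symm

theorem aeval_Ygen_ne_zero (p : MvPolynomial (Fin 2) ℚ) (hp : eval 1 p ≠ 0) :
    aeval Ygen p ≠ 0 := by
  rw [aeval_Ygen]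
  exact (IsFractionRing.injective _ K2).ne_iff' (map_zero _) |>.mpr fun h => hp (by simp [h])

theorem coxeterMutationG2_iterate_four_Ygen : coxeterMutationG2^[4] Ygen = Ygen := by
  have hY : Ygen = ![Ygen 0, Ygen 1] := by ext i; fin_cases i <;> rfl
  rw [hY]
  apply coxeterMutationG2_iterate_four
  · simpa using aeval_Ygen_ne_zero (X 0) (by simp)
  · simpa using aeval_Ygen_ne_zero (X 1) (by simp)
  · have h := aeval_Ygen_ne_zero (1 + X 0) (by norm_num); simpa using h
  · have h := aeval_Ygen_ne_zero (1 + X 1) (by norm_num); simpa using h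
  · have h := aeval_Ygen_ne_zero ((1 + X 0) ^ 2 + X 0 ^ 2 * X 1) (by norm_num); simpa using h
  · have h := aeval_Ygen_ne_zero ((1 + X 0) ^ 3 + X 0 ^ 3 * X 1) (by norm_num); simpa using h
  · have h := aeval_Ygen_ne_zero
      ((1 + X 0) ^ 3 + 3 * X 0 ^ 2 * X 1 + 2 * X 0 ^ 3 * X 1 + X 0 ^ 3 * X 1 ^ 2) (by norm_num)
    simpa using h
  · have h := aeval_Ygen_ne_zero (1 + X 0 + X 0 * X 1) (by norm_num); simpa using h

/-- For the G₂ exchange matrix `B = [[0,−3],[1,0]]`, the alternating mutation sequence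
`μ₁, μ₂, μ₁, μ₂, μ₁, μ₂, μ₁, μ₂` of length 8 returns the classical y-seed to its
initial value. -/
theorem G2_y_period_eight :
    ([0, 1, 0, 1, 0, 1, 0, 1] : List (Fin 2)).foldl muSeed (!![0, -3; 1, 0], Ygen) =
      (!![0, -3; 1, 0], Ygen) := by
  simp only [List.foldl_cons, List.foldl_nil, muSeed_G2_zero_one]
  exact congrArg _ coxeterMutationG2_iterate_four_Ygen
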